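/- Let u be a smooth function on I = [y_L, y_R] with ω = u_y. Let ω_h ∈ V_h^k and let u_h be a globally continuous piecewise polynomial in V_h^{k+1} such that (u_h)_y = ω_h on each cell and u_h(y_{N+1/2}) = u(y_R). Define ξ^u = P⁺u − u_h, η^u = u − P⁺u (with P⁺ the Gauss–Radau projection onto V_h^{k+1}), ξ^ω = Pω − ω_h, η^ω = ω − Pω (with P the L² projection onto V_h^k). Then there exists a positive constant C_σ depending only on the inverse inequality constant σ, independent of h, such that ‖ξ^u_y‖_{L²(I)} + h^{−1/2}‖⟦ξ^u⟧‖_{L²(∂I)} ≤ C_σ(‖ξ^ω‖_{L²(I)} + ‖η^ω‖_{L²(I)} + h^{−1}‖η^u‖_{L²(I)}), where ‖ξ^u_y‖_{L²(I)} is the broken (cell-by-cell) L² norm of the derivative and ‖⟦ξ^u⟧‖_{L²(∂I)} is the ℓ² norm of the interface jumps of ξ^u. -/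

import Mathlib

open MeasureTheory Polynomial
open scoped Classical

noncomputable section

/- Mesh with `N + 1` cells: cell `j` is `I_j = [grid j.castSucc, grid j.succ]`.
A DG function in `V_h^m` is represented by the family of its polynomial restrictions
to the cells. -/

/-- Left endpoint of cell `j`. -/
def lep {N : ℕ} (grid : Fin (N + 2) → ℝ) (j : Fin (N + 1)) : ℝ := grid j.castSucc

/-- Right endpoint of cell `j`. -/
def rep {N : ℕ} (grid : Fin (N + 2) → ℝ) (j : Fin (N + 1)) : ℝ := grid j.succ

/-- `∫_{I_j} f dy`. -/
def cellInt {N : ℕ} (grid : Fin (N + 2) → ℝ) (j : Fin (N + 1)) (f : ℝ → ℝ) : ℝ :=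
  ∫ y in lep grid j..rep grid j, f y



open intervalIntegral

lemma my_sqrt_add_le (x y : ℝ) (hx : 0 ≤ x) (hy : 0 ≤ y) :
    Real.sqrt (x + y) ≤ Real.sqrt x + Real.sqrt y := by
  have h : x + y ≤ (Real.sqrt x + Real.sqrt y)^2 := by
    have := Real.sq_sqrt hx
    have := Real.sq_sqrt hy
    have := Real.sqrt_nonneg x
    have := Real.sqrt_nonneg y
    nlinarith [mul_nonneg (Real.sqrt_nonneg x) (Real.sqrt_nonneg y)]
  calc Real.sqrt (x + y) ≤ Real.sqrt ((Real.sqrt x + Real.sqrt y)^2) := Real.sqrt_le_sqrt h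
    _ = Real.sqrt x + Real.sqrt y := Real.sqrt_sq (by positivity)

lemma my_integral_CS {g : ℝ → ℝ} (hg : Continuous g) {a b : ℝ} (hab : a ≤ b) :
    (∫ y in a..b, g y) ^ 2 ≤ (b - a) * ∫ y in a..b, (g y)^2 := by
  rcases eq_or_lt_of_le hab with rfl | hlt
  · simp
  · have hba : 0 < b - a := by linarith
    set T : ℝ := (∫ y in a..b, g y) / (b - a) with hT
    have key : 0 ≤ ∫ y in a..b, (g y - T)^2 :=
      intervalIntegral.integral_nonneg hab (fun y _ => by positivity)
    have expand : (∫ y in a..b, (g y - T)^2)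
        = (∫ y in a..b, (g y)^2) - 2*T*(∫ y in a..b, g y) + T^2*(b-a) := by
      have h1 : (∫ y in a..b, (g y - T)^2)
          = ∫ y in a..b, ((g y)^2 - (2*T)*(g y) + T^2) := by
        apply intervalIntegral.integral_congr
        intro y _; ring
      rw [h1, intervalIntegral.integral_add, intervalIntegral.integral_sub,
        intervalIntegral.integral_const_mul, intervalIntegral.integral_const]
      · simp only [smul_eq_mul]; ring
      · exact ((hg.pow 2)).intervalIntegrable a b
      · exact (continuous_const.mul hg).intervalIntegrable a b
      · exact (((hg.pow 2)).sub (continuous_const.mul hg)).intervalIntegrable a b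
      · exact intervalIntegrable_const
    rw [expand] at key
    have hTeq : T * (b - a) = ∫ y in a..b, g y := by
      rw [hT, div_mul_cancel₀ _ hba.ne']
    nlinarith [key, sq_nonneg T]


lemma Qform (m : ℕ) (c : Fin (m+1) → ℝ) :
    (∫ t in (0:ℝ)..1, (∑ i : Fin (m+1), c i * t^(i:ℕ))^2)
      = ∑ i : Fin (m+1), ∑ j : Fin (m+1), c i * c j * (1/((i:ℕ)+(j:ℕ)+1 : ℝ)) := by
  have h1 : ∀ t : ℝ, (∑ i : Fin (m+1), c i * t^(i:ℕ))^2
      = ∑ i : Fin (m+1), ∑ j : Fin (m+1), (c i * c j) * t^((i:ℕ)+(j:ℕ)) := by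
    intro t
    rw [sq, Finset.sum_mul_sum]
    apply Finset.sum_congr rfl; intro i _
    apply Finset.sum_congr rfl; intro j _
    rw [pow_add]; ring
  calc (∫ t in (0:ℝ)..1, (∑ i : Fin (m+1), c i * t^(i:ℕ))^2)
      = ∫ t in (0:ℝ)..1, ∑ i : Fin (m+1), ∑ j : Fin (m+1), (c i * c j) * t^((i:ℕ)+(j:ℕ)) :=
        intervalIntegral.integral_congr (fun t _ => h1 t)
    _ = ∑ i : Fin (m+1), ∫ t in (0:ℝ)..1, ∑ j : Fin (m+1), (c i * c j) * t^((i:ℕ)+(j:ℕ)) := by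
        apply intervalIntegral.integral_finset_sum
        intro i _
        apply Continuous.intervalIntegrable
        continuity
    _ = ∑ i : Fin (m+1), ∑ j : Fin (m+1), c i * c j * (1/((i:ℕ)+(j:ℕ)+1 : ℝ)) := by
        apply Finset.sum_congr rfl; intro i _
        rw [intervalIntegral.integral_finset_sum (fun j _ =>
          (Continuous.intervalIntegrable (by continuity) 0 1))]
        apply Finset.sum_congr rfl; intro j _
        rw [intervalIntegral.integral_const_mul, integral_pow]
        push_cast
        ring


lemma sq_poly_integral_pos {p : Polynomial ℝ} (hp : p ≠ 0) :
    0 < ∫ t in (0:ℝ)..1, (p.eval t)^2 := by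
  have hf : Continuous fun t : ℝ => (p.eval t)^2 := (Polynomial.continuous p).pow 2
  rw [intervalIntegral.integral_pos_iff_support_of_nonneg_ae
    (Filter.Eventually.of_forall (fun t => sq_nonneg _)) (hf.intervalIntegrable 0 1)]
  refine ⟨by norm_num, ?_⟩
  have hroots := Polynomial.finite_setOf_isRoot hp
  have hsub : Set.Ioc (0:ℝ) 1 \ {x | p.IsRoot x}
      ⊆ Function.support (fun t => (p.eval t)^2) ∩ Set.Ioc 0 1 := by
    rintro x ⟨hx1, hx2⟩
    refine ⟨?_, hx1⟩
    simp only [Function.mem_support]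
    intro h
    exact hx2 (by simpa [Polynomial.IsRoot] using pow_eq_zero_iff two_ne_zero |>.mp h)
  have h1 : (volume : Measure ℝ) (Set.Ioc (0:ℝ) 1 \ {x | p.IsRoot x})
      = volume (Set.Ioc (0:ℝ) 1) := measure_diff_null (hroots.measure_zero _)
  have h2 : (volume : Measure ℝ) (Set.Ioc (0:ℝ) 1) = 1 := by simp
  calc (0 : ENNReal) < 1 := by norm_num
    _ = volume (Set.Ioc (0:ℝ) 1 \ {x | p.IsRoot x}) := by rw [h1, h2]
    _ ≤ _ := measure_mono hsub


lemma poly_trace_unit (m : ℕ) : ∃ A : ℝ, 0 < A ∧ ∀ p : Polynomial ℝ, p.natDegree ≤ m →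
    (p.eval 1)^2 ≤ A * ∫ t in (0:ℝ)..1, (p.eval t)^2 := by
  classical
  set Q : (Fin (m+1) → ℝ) → ℝ :=
    fun c => ∑ i : Fin (m+1), ∑ j : Fin (m+1), c i * c j * (1/((i:ℕ)+(j:ℕ)+1 : ℝ)) with hQ
  have hQcont : Continuous Q := by
    apply continuous_finset_sum; intro i _
    apply continuous_finset_sum; intro j _
    exact ((continuous_apply i).mul (continuous_apply j)).mul continuous_const
  -- Q of coefficients equals the L² integral of the polynomial built from them
  have hQeval : ∀ c : Fin (m+1) → ℝ,
      Q c = ∫ t in (0:ℝ)..1, ((∑ i : Fin (m+1), C (c i) * X^(i:ℕ)).eval t)^2 := by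
    intro c
    simp only [hQ]
    rw [← Qform m c]
    apply intervalIntegral.integral_congr
    intro t _
    simp [eval_finset_sum]
  -- positivity of Q on nonzero vectors
  have hQpos : ∀ c : Fin (m+1) → ℝ, c ≠ 0 → 0 < Q c := by
    intro c hc
    rw [hQeval c]
    apply sq_poly_integral_pos
    intro hzero
    apply hc
    funext i₀
    have : (∑ i : Fin (m+1), C (c i) * X^(i:ℕ)).coeff (i₀:ℕ) = c i₀ := by
      rw [Polynomial.finset_sum_coeff]
      rw [Finset.sum_eq_single i₀]
      · simp
      · intro j _ hj
        have hne2 : (i₀:ℕ) ≠ (j:ℕ) := fun h => hj (Fin.ext h.symm)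
        rw [Polynomial.coeff_C_mul, Polynomial.coeff_X_pow, if_neg hne2, mul_zero]
      · simp
    rw [hzero] at this
    simpa using this.symm
  -- homogeneity
  have hQhom : ∀ (s : ℝ) (c : Fin (m+1) → ℝ), Q (s • c) = s^2 * Q c := by
    intro s c
    simp only [hQ, Pi.smul_apply, smul_eq_mul, Finset.mul_sum]
    apply Finset.sum_congr rfl; intro i _
    apply Finset.sum_congr rfl; intro j _
    ring
  -- minimum on the sphere
  have hcpt : IsCompact (Metric.sphere (0 : Fin (m+1) → ℝ) 1) := isCompact_sphere _ _
  have hne : (Metric.sphere (0 : Fin (m+1) → ℝ) 1).Nonempty :=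
    NormedSpace.sphere_nonempty.mpr zero_le_one
  obtain ⟨c₀, hc₀mem, hc₀min⟩ := hcpt.exists_isMinOn hne hQcont.continuousOn
  have hc₀ne : c₀ ≠ 0 := by
    intro h
    have := mem_sphere_zero_iff_norm.mp hc₀mem
    rw [h] at this; simp at this
  set μ : ℝ := Q c₀ with hμ
  have hμpos : 0 < μ := hQpos c₀ hc₀ne
  -- lower bound Q c ≥ μ ‖c‖²
  have hlow : ∀ c : Fin (m+1) → ℝ, μ * ‖c‖^2 ≤ Q c := by
    intro c
    by_cases hc : c = 0
    · simp [hc, hQ]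
    · have hn : (0:ℝ) < ‖c‖ := norm_pos_iff.mpr hc
      set v : Fin (m+1) → ℝ := ‖c‖⁻¹ • c with hv
      have hvmem : v ∈ Metric.sphere (0 : Fin (m+1) → ℝ) 1 := by
        rw [mem_sphere_zero_iff_norm, hv, norm_smul]
        simp [abs_of_pos (inv_pos.mpr hn), inv_mul_cancel₀ hn.ne']
      have hcv : c = ‖c‖ • v := by
        rw [hv, smul_smul, mul_inv_cancel₀ hn.ne', one_smul]
      calc μ * ‖c‖^2 ≤ Q v * ‖c‖^2 :=
            mul_le_mul_of_nonneg_right (hc₀min hvmem : Q c₀ ≤ Q v) (sq_nonneg _)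
        _ = Q c := by
            have h4 : Q (‖c‖ • v) = ‖c‖^2 * Q v := hQhom _ _
            rw [← hcv] at h4
            rw [h4]; ring
  refine ⟨(m+1)^2 * μ⁻¹, by positivity, ?_⟩
  intro p hdeg
  set c : Fin (m+1) → ℝ := fun i => p.coeff (i:ℕ) with hc
  have hev : ∀ t : ℝ, p.eval t = ∑ i : Fin (m+1), c i * t^(i:ℕ) := by
    intro t
    rw [Polynomial.eval_eq_sum_range' (Nat.lt_succ_of_le hdeg)]
    rw [← Fin.sum_univ_eq_sum_range (fun i => p.coeff i * t^i) (m+1)]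
  have hQc : Q c = ∫ t in (0:ℝ)..1, (p.eval t)^2 := by
    simp only [hQ]
    rw [← Qform m c]
    apply intervalIntegral.integral_congr
    intro t _
    show (∑ i : Fin (m+1), c i * t^(i:ℕ))^2 = (p.eval t)^2
    rw [hev t]
  have h1 : p.eval 1 = ∑ i : Fin (m+1), c i := by
    rw [hev 1]; simp
  have habs : |∑ i : Fin (m+1), c i| ≤ (m+1) * ‖c‖ := by
    calc |∑ i : Fin (m+1), c i| ≤ ∑ i : Fin (m+1), |c i| := Finset.abs_sum_le_sum_abs _ _
      _ ≤ ∑ _i : Fin (m+1), ‖c‖ := by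
          apply Finset.sum_le_sum
          intro i _
          simpa [Real.norm_eq_abs] using norm_le_pi_norm c i
      _ = (m+1) * ‖c‖ := by simp [Finset.sum_const, mul_comm]
  have hsq : (p.eval 1)^2 ≤ (m+1)^2 * ‖c‖^2 := by
    rw [h1]
    have h2 : ((m:ℝ)+1) * ‖c‖ ≥ 0 := by positivity
    nlinarith [abs_nonneg (∑ i : Fin (m+1), c i), sq_abs (∑ i : Fin (m+1), c i)]
  calc (p.eval 1)^2 ≤ (m+1)^2 * ‖c‖^2 := hsq
    _ ≤ (m+1)^2 * (μ⁻¹ * Q c) := by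
        have := hlow c
        have h3 : ‖c‖^2 ≤ μ⁻¹ * Q c := by
          rw [inv_mul_eq_div, le_div_iff₀ hμpos]
          linarith [hlow c, mul_comm μ (‖c‖^2)]
        nlinarith [sq_nonneg ((m:ℝ)+1)]
    _ = (m+1)^2 * μ⁻¹ * ∫ t in (0:ℝ)..1, (p.eval t)^2 := by rw [hQc]; ring


lemma poly_trace_cell (m : ℕ) : ∃ A : ℝ, 0 < A ∧ ∀ (l r : ℝ), l < r →
    ∀ p : Polynomial ℝ, p.natDegree ≤ m →
    (p.eval r)^2 ≤ A * (r - l)⁻¹ * ∫ y in l..r, (p.eval y)^2 := by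
  obtain ⟨A, hA, hAp⟩ := poly_trace_unit m
  refine ⟨A, hA, ?_⟩
  intro l r hlr p hdeg
  have hh : (0:ℝ) < r - l := by linarith
  set q : Polynomial ℝ := p.comp (C (r - l) * X + C l) with hq
  have hqdeg : q.natDegree ≤ m := by
    rw [hq, Polynomial.natDegree_comp, Polynomial.natDegree_linear hh.ne']
    simpa using hdeg
  have hqeval : ∀ t : ℝ, q.eval t = p.eval ((r - l) * t + l) := by
    intro t; simp [hq, Polynomial.eval_comp]
  have h1 : q.eval 1 = p.eval r := by rw [hqeval]; ring_nf
  have h2 : (∫ t in (0:ℝ)..1, (q.eval t)^2) = (r-l)⁻¹ * ∫ y in l..r, (p.eval y)^2 := by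
    have h3 : (∫ t in (0:ℝ)..1, (q.eval t)^2)
        = ∫ t in (0:ℝ)..1, (fun y => (p.eval y)^2) ((r-l) * t + l) := by
      apply intervalIntegral.integral_congr
      intro t _; simp [hqeval]
    rw [h3, intervalIntegral.integral_comp_mul_add (fun y => (p.eval y)^2) hh.ne' l]
    norm_num
  have := hAp q hqdeg
  rw [h1, h2] at this
  linarith [this]


noncomputable def antider (p : Polynomial ℝ) : Polynomial ℝ :=
  p.sum fun n a => C (a / (n+1)) * X^(n+1)

lemma antider_derivative (p : Polynomial ℝ) : (antider p).derivative = p := by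
  unfold antider
  rw [Polynomial.sum, map_sum]
  conv_rhs => rw [← Polynomial.sum_C_mul_X_pow_eq p, Polynomial.sum]
  apply Finset.sum_congr rfl
  intro n _
  rw [Polynomial.derivative_C_mul, Polynomial.derivative_X_pow]
  rw [← mul_assoc, ← Polynomial.C_mul]
  have : (n:ℝ) + 1 ≠ 0 := by positivity
  rw [show n + 1 - 1 = n from rfl]
  congr 1
  push_cast
  field_simp

lemma antider_natDegree (p : Polynomial ℝ) : (antider p).natDegree ≤ p.natDegree + 1 := by
  unfold antider
  rw [Polynomial.sum]
  apply Polynomial.natDegree_sum_le_of_forall_le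
  intro n hn
  calc (C (p.coeff n / (n+1)) * X^(n+1)).natDegree ≤ 0 + (n+1) := by
        apply le_trans (Polynomial.natDegree_mul_le)
        gcongr
        · exact le_of_eq (Polynomial.natDegree_C _)
        · exact Polynomial.natDegree_X_pow_le _
    _ ≤ p.natDegree + 1 := by
        have := Polynomial.le_natDegree_of_mem_supp n hn
        omega


set_option maxHeartbeats 2000000 in
lemma cell_core (k : ℕ) (A : ℝ) (hA : 0 < A)
    (htr : ∀ (l r : ℝ), l < r → ∀ p : Polynomial ℝ, p.natDegree ≤ k + 1 →
      (p.eval r)^2 ≤ A * (r - l)⁻¹ * ∫ y in l..r, (p.eval y)^2)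
    (l r : ℝ) (hlr : l < r) (u : ℝ → ℝ) (hu : ContDiff ℝ (⊤ : ℕ∞) u)
    (Pu Pw : Polynomial ℝ) (hdPu : Pu.natDegree ≤ k + 1) (hdPw : Pw.natDegree ≤ k)
    (hgw : ∀ φ : Polynomial ℝ, φ.natDegree ≤ k →
      (∫ y in l..r, (deriv u y - Pw.eval y) * φ.eval y) = 0)
    (hgu : ∀ φ : Polynomial ℝ, φ.natDegree ≤ k →
      (∫ y in l..r, (u y - Pu.eval y) * φ.eval y) = 0)
    (hl : Pu.eval l = u l) :
    (u r - Pu.eval r)^2 ≤ (4*A+2) * ((r - l)⁻¹ * (∫ y in l..r, (u y - Pu.eval y)^2)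
        + (r - l) * ∫ y in l..r, (deriv u y - Pw.eval y)^2)
    ∧ (∫ y in l..r, (Pu.derivative.eval y - Pw.eval y)^2)
        ≤ A * (r - l)⁻¹ * (u r - Pu.eval r)^2 := by
  have hh : (0:ℝ) < r - l := by linarith
  have hinv : (r - l)⁻¹ * (r - l) = 1 := inv_mul_cancel₀ hh.ne'
  have hinvpos : (0:ℝ) < (r - l)⁻¹ := inv_pos.mpr hh
  set η : ℝ → ℝ := fun y => u y - Pu.eval y with hη
  set g : ℝ → ℝ := fun y => deriv u y - Pw.eval y with hg
  set e : Polynomial ℝ := Pu.derivative - Pw with he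
  have heval : ∀ y : ℝ, e.eval y = Pu.derivative.eval y - Pw.eval y := by
    intro y; simp [he]
  have hcu : Continuous u := hu.continuous
  have hcd : Continuous (deriv u) := hu.continuous_deriv (by simp)
  have hcη : Continuous η := hcu.sub (Polynomial.continuous Pu)
  have hcg : Continuous g := hcd.sub (Polynomial.continuous Pw)
  have hce : Continuous (fun y => e.eval y) := Polynomial.continuous e
  have hηd : ∀ y : ℝ, HasDerivAt η (deriv u y - Pu.derivative.eval y) y := by
    intro y
    exact (((hu.differentiable (by simp)) y).hasDerivAt).sub (Pu.hasDerivAt y)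
  have hde : e.natDegree ≤ k := by
    apply le_trans (Polynomial.natDegree_sub_le _ _)
    have h1 : Pu.derivative.natDegree ≤ k := by
      have := Polynomial.natDegree_derivative_le Pu
      omega
    exact max_le h1 hdPw
  have hηl : η l = 0 := by simp [hη, hl]
  -- degrees
  have hde' : e.derivative.natDegree ≤ k := by
    have := Polynomial.natDegree_derivative_le e
    omega
  -- integration by parts identity : ∫ η' e = η r * e r
  have hibp : (∫ y in l..r, (deriv u y - Pu.derivative.eval y) * e.eval y)
      = η r * e.eval r := by
    have h0 := intervalIntegral.integral_deriv_mul_eq_sub_of_hasDerivAt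
      (u := η) (v := fun y => e.eval y)
      (u' := fun y => deriv u y - Pu.derivative.eval y)
      (v' := fun y => e.derivative.eval y)
      (hcη.continuousOn) (hce.continuousOn)
      (fun x _ => hηd x) (fun x _ => Polynomial.hasDerivAt e x)
      (((hcd.sub (Polynomial.continuous Pu.derivative))).intervalIntegrable l r)
      ((Polynomial.continuous e.derivative).intervalIntegrable l r)
    rw [intervalIntegral.integral_add
        (f := fun x => (deriv u x - Pu.derivative.eval x) * e.eval x)
        (g := fun x => η x * e.derivative.eval x)
        (((hcd.sub (Polynomial.continuous Pu.derivative)).mul hce).intervalIntegrable l r)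
        ((hcη.mul (Polynomial.continuous e.derivative)).intervalIntegrable l r)] at h0
    have h2 : (∫ y in l..r, η y * e.derivative.eval y) = 0 := hgu e.derivative hde'
    rw [h2, add_zero] at h0
    rw [h0, hηl]
    ring
  -- the key identity  ∫ e² = - η r * e r
  have hkey : (∫ y in l..r, (e.eval y)^2) = -(η r * e.eval r) := by
    have h3 : (∫ y in l..r, (e.eval y)^2)
        = (∫ y in l..r, (g y * e.eval y - (deriv u y - Pu.derivative.eval y) * e.eval y)) := by
      apply intervalIntegral.integral_congr
      intro y _
      simp only [hg, heval]
      ring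
    rw [h3, intervalIntegral.integral_sub
      (f := fun y => g y * e.eval y) (g := fun y => (deriv u y - Pu.derivative.eval y) * e.eval y)
      ((hcg.mul hce).intervalIntegrable l r)
      (((hcd.sub (Polynomial.continuous Pu.derivative)).mul hce).intervalIntegrable l r),
      hibp, hgw e hde]
    ring
  -- part (ii)
  have part2 : (∫ y in l..r, (Pu.derivative.eval y - Pw.eval y)^2)
      ≤ A * (r - l)⁻¹ * (u r - Pu.eval r)^2 := by
    have hXN : (∫ y in l..r, (Pu.derivative.eval y - Pw.eval y)^2)
        = ∫ y in l..r, (e.eval y)^2 := by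
      apply intervalIntegral.integral_congr
      intro y _
      show (Pu.derivative.eval y - Pw.eval y)^2 = (e.eval y)^2
      rw [heval]
    rw [hXN]
    set X : ℝ := ∫ y in l..r, (e.eval y)^2 with hX
    have hX0 : 0 ≤ X := intervalIntegral.integral_nonneg hlr.le (fun y _ => sq_nonneg _)
    have htre : (e.eval r)^2 ≤ A * (r - l)⁻¹ * X := htr l r hlr e (by omega)
    rcases eq_or_lt_of_le hX0 with hX0' | hXpos
    · rw [← hX0']
      positivity
    · have h5 : X * X ≤ (A * (r - l)⁻¹ * (u r - Pu.eval r)^2) * X := by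
        have h6 : X * X = (η r)^2 * (e.eval r)^2 := by
          rw [hkey]; ring
        rw [h6]
        calc (η r)^2 * (e.eval r)^2 ≤ (η r)^2 * (A * (r - l)⁻¹ * X) :=
              mul_le_mul_of_nonneg_left htre (sq_nonneg _)
          _ = (A * (r - l)⁻¹ * (u r - Pu.eval r)^2) * X := by rw [hη]; ring
      exact le_of_mul_le_mul_right h5 hXpos
  -- part (i)
  set D : ℝ := ∫ y in l..r, (g y)^2 with hD
  have hD0 : 0 ≤ D := intervalIntegral.integral_nonneg hlr.le (fun y _ => sq_nonneg _)
  set N : ℝ := ∫ y in l..r, (η y)^2 with hN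
  have hN0 : 0 ≤ N := intervalIntegral.integral_nonneg hlr.le (fun y _ => sq_nonneg _)
  set G : ℝ → ℝ := fun y => ∫ t in l..y, g t with hG
  have hGd : ∀ y : ℝ, HasDerivAt G (g y) y := by
    intro y
    exact intervalIntegral.integral_hasDerivAt_right (hcg.intervalIntegrable l y)
      (hcg.stronglyMeasurableAtFilter volume _) hcg.continuousAt
  have hGcont : Continuous G := by
    have : Differentiable ℝ G := fun y => (hGd y).differentiableAt
    exact this.continuous
  have hGl : G l = 0 := by simp [hG]
  set p₀ : Polynomial ℝ := antider (-e) - C ((antider (-e)).eval l) with hp₀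
  have hp₀deg : p₀.natDegree ≤ k + 1 := by
    apply le_trans (Polynomial.natDegree_sub_le _ _)
    apply max_le
    · apply le_trans (antider_natDegree _)
      have : (-e).natDegree = e.natDegree := Polynomial.natDegree_neg e
      omega
    · simp [Polynomial.natDegree_C]
  have hp₀der : p₀.derivative = -e := by
    rw [hp₀, Polynomial.derivative_sub, Polynomial.derivative_C, sub_zero, antider_derivative]
  have hp₀l : p₀.eval l = 0 := by simp [hp₀]
  -- representation η = G + p₀ on ℝ
  have hrep : ∀ y : ℝ, η y = G y + p₀.eval y := by
    set F : ℝ → ℝ := fun y => η y - G y - p₀.eval y with hF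
    have hFd : ∀ y : ℝ, HasDerivAt F 0 y := by
      intro y
      have h7 := ((hηd y).sub (hGd y)).sub (p₀.hasDerivAt y)
      have h7' : deriv u y - Pu.derivative.eval y - g y - p₀.derivative.eval y = 0 := by
        rw [hp₀der]
        simp only [hg, Polynomial.eval_neg, heval]
        ring
      rw [h7'] at h7
      exact h7
    have hFconst : ∀ y : ℝ, F y = F l := by
      intro y
      exact is_const_of_deriv_eq_zero (fun x => (hFd x).differentiableAt)
        (fun x => (hFd x).deriv) y l
    intro y
    have h8 := hFconst y
    simp only [hF] at h8
    rw [hηl, hGl, hp₀l] at h8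
    linarith [h8]
  -- pointwise bound on G on the cell
  have hGb : ∀ y ∈ Set.Icc l r, (G y)^2 ≤ (r - l) * D := by
    intro y hy
    have h9 : (G y)^2 ≤ (y - l) * ∫ t in l..y, (g t)^2 := my_integral_CS hcg hy.1
    have h10 : (∫ t in l..y, (g t)^2) ≤ D := by
      have hi1 : IntervalIntegrable (fun t => (g t)^2) volume l y :=
        (hcg.pow 2).intervalIntegrable l y
      have hi2 : IntervalIntegrable (fun t => (g t)^2) volume y r :=
        (hcg.pow 2).intervalIntegrable y r
      have h11 := intervalIntegral.integral_add_adjacent_intervals hi1 hi2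
      have h12 : 0 ≤ ∫ t in y..r, (g t)^2 :=
        intervalIntegral.integral_nonneg hy.2 (fun t _ => sq_nonneg _)
      rw [hD, ← h11]
      linarith
    have h13 : 0 ≤ ∫ t in l..y, (g t)^2 :=
      intervalIntegral.integral_nonneg hy.1 (fun t _ => sq_nonneg _)
    calc (G y)^2 ≤ (y - l) * ∫ t in l..y, (g t)^2 := h9
      _ ≤ (r - l) * D := by
          apply mul_le_mul (by linarith [hy.2]) h10 h13 hh.le
  -- ∫ G² ≤ (r-l)²·D
  have hGint : (∫ y in l..r, (G y)^2) ≤ (r - l) * ((r - l) * D) := by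
    have h14 : (∫ y in l..r, (G y)^2) ≤ ∫ _y in l..r, (r - l) * D := by
      apply intervalIntegral.integral_mono_on hlr.le
        ((hGcont.pow 2).intervalIntegrable l r) (intervalIntegrable_const) hGb
    rw [intervalIntegral.integral_const, smul_eq_mul] at h14
    exact h14
  -- ∫ p₀² ≤ 2 N + 2 ∫G²
  have hp₀int : (∫ y in l..r, (p₀.eval y)^2) ≤ 2*N + 2*(∫ y in l..r, (G y)^2) := by
    have h15 : (∫ y in l..r, (p₀.eval y)^2) ≤ ∫ y in l..r, (2*(η y)^2 + 2*(G y)^2) := by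
      apply intervalIntegral.integral_mono_on hlr.le
        (((Polynomial.continuous p₀).pow 2).intervalIntegrable l r)
        (((continuous_const.mul (hcη.pow 2)).add
          (continuous_const.mul (hGcont.pow 2))).intervalIntegrable l r)
      intro y _
      have h16 : p₀.eval y = η y - G y := by rw [hrep y]; ring
      show (p₀.eval y)^2 ≤ 2*(η y)^2 + 2*(G y)^2
      rw [h16]
      nlinarith [sq_nonneg (η y + G y)]
    rw [intervalIntegral.integral_add
        (f := fun y => 2*(η y)^2) (g := fun y => 2*(G y)^2)
        ((continuous_const.mul (hcη.pow 2)).intervalIntegrable l r)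
        ((continuous_const.mul (hGcont.pow 2)).intervalIntegrable l r),
      intervalIntegral.integral_const_mul, intervalIntegral.integral_const_mul] at h15
    rw [hN]
    linarith [h15]
  have htrp : (p₀.eval r)^2 ≤ A * (r - l)⁻¹ * (2*N + 2*((r - l) * ((r - l) * D))) := by
    calc (p₀.eval r)^2 ≤ A * (r - l)⁻¹ * ∫ y in l..r, (p₀.eval y)^2 := htr l r hlr p₀ hp₀deg
      _ ≤ A * (r - l)⁻¹ * (2*N + 2*((r - l) * ((r - l) * D))) := by
          apply mul_le_mul_of_nonneg_left _ (by positivity)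
          linarith [hp₀int, hGint]
  -- conclude part (i)
  have hGr : (G r)^2 ≤ (r - l) * D := hGb r ⟨hlr.le, le_refl r⟩
  have part1 : (u r - Pu.eval r)^2 ≤ (4*A+2) * ((r - l)⁻¹ * N + (r - l) * D) := by
    have h17 : (u r - Pu.eval r)^2 = (η r)^2 := by rw [hη]
    rw [h17, hrep r]
    have h18 : (G r + p₀.eval r)^2 ≤ 2*(G r)^2 + 2*(p₀.eval r)^2 := by
      nlinarith [sq_nonneg (G r - p₀.eval r)]
    have h19 : A * (r - l)⁻¹ * (2*N + 2*((r - l) * ((r - l) * D)))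
        = 2*A*((r - l)⁻¹*N) + 2*A*((r - l)*D) * ((r - l)⁻¹ * (r - l)) := by ring
    rw [hinv, mul_one] at h19
    have h20 : (p₀.eval r)^2 ≤ 2*A*((r - l)⁻¹*N) + 2*A*((r - l)*D) := by
      rw [← h19]; exact htrp
    have h21 : 0 ≤ (r - l)⁻¹ * N := by positivity
    have h22 : 0 ≤ (r - l) * D := by positivity
    nlinarith [h18, hGr, h20]
  exact ⟨part1, part2⟩


set_option maxHeartbeats 2000000 in
/-- **Lemma 3.2: bound for `ξ^u` in the integration DG scheme.**
Let `u` be smooth on `I = [y_L, y_R]` with `ω = u_y`, `ω_h ∈ V_h^k`, and let `u_h` be the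
globally continuous function in `V_h^{k+1}` with `(u_h)_y = ω_h` on each cell and
`u_h(y_R) = u(y_R)`.  With `ξ^u = P⁺u - u_h`, `η^u = u - P⁺u` (Gauss–Radau projection onto
`V_h^{k+1}`), `ξ^ω = Pω - ω_h`, `η^ω = ω - Pω` (`L²` projection onto `V_h^k`), there is a
constant `C`, independent of the mesh size `h` (depending on the degree `k`, the domain and
the mesh-regularity constant `δ` through the inverse constant `σ`), such that
`‖ξ^u_y‖_{L²(I)} + h^{-1/2}‖⟦ξ^u⟧‖_{L²(∂I)}
   ≤ C (‖ξ^ω‖_{L²(I)} + ‖η^ω‖_{L²(I)} + h^{-1}‖η^u‖_{L²(I)})`. -/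
theorem integrationDG_xi_u_bound
    (k : ℕ) (yL yR : ℝ) (hI : yL < yR) (δ : ℝ) (hδ : 0 < δ) :
    ∃ C : ℝ, 0 < C ∧
      ∀ (N : ℕ) (grid : Fin (N + 2) → ℝ) (hm : ℝ),
        StrictMono grid → grid 0 = yL → grid (Fin.last (N + 1)) = yR →
        (∀ j : Fin (N + 1),
          rep grid j - lep grid j ≤ hm ∧ hm ≤ δ * (rep grid j - lep grid j)) →
        ∀ u : ℝ → ℝ, ContDiff ℝ (⊤ : ℕ∞) u →
        ∀ uh wh Pu Pw : Fin (N + 1) → Polynomial ℝ,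
        (∀ j, (uh j).natDegree ≤ k + 1 ∧ (wh j).natDegree ≤ k ∧
          (Pu j).natDegree ≤ k + 1 ∧ (Pw j).natDegree ≤ k) →
        -- `u_h` satisfies `(u_h)_y = ω_h` on each cell
        (∀ j : Fin (N + 1), ∀ y ∈ Set.Icc (lep grid j) (rep grid j),
          (uh j).derivative.eval y = (wh j).eval y) →
        -- `u_h` is globally continuous
        (∀ (j : Fin (N + 1)) (h : (j : ℕ) < N),
          (uh j).eval (rep grid j) = (uh ⟨(j : ℕ) + 1, by omega⟩).eval (rep grid j)) →
        -- boundary condition `u_h(y_R) = u(y_R)`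
        (uh (Fin.last N)).eval (rep grid (Fin.last N)) = u yR →
        -- `Pw` is the `L²` projection of `ω = u_y` into `V_h^k`
        (∀ (j : Fin (N + 1)) (φ : Polynomial ℝ), φ.natDegree ≤ k →
          cellInt grid j (fun y => (deriv u y - (Pw j).eval y) * φ.eval y) = 0) →
        -- `Pu` is the Gauss–Radau projection `P⁺u` into `V_h^{k+1}`
        (∀ (j : Fin (N + 1)) (φ : Polynomial ℝ), φ.natDegree ≤ k →
          cellInt grid j (fun y => (u y - (Pu j).eval y) * φ.eval y) = 0) →
        (∀ j : Fin (N + 1), (Pu j).eval (lep grid j) = u (lep grid j)) →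
        -- the conclusion:
        Real.sqrt (∑ j, cellInt grid j
            (fun y => ((Pu j).derivative.eval y - (uh j).derivative.eval y) ^ 2))
          + (Real.sqrt hm)⁻¹ * Real.sqrt (∑ j : Fin (N + 1),
              if h : (j : ℕ) < N then
                (((Pu ⟨(j : ℕ) + 1, by omega⟩).eval (rep grid j)
                    - (uh ⟨(j : ℕ) + 1, by omega⟩).eval (rep grid j))
                  - ((Pu j).eval (rep grid j) - (uh j).eval (rep grid j))) ^ 2
              else 0)
          ≤ C * (Real.sqrt (∑ j, cellInt grid j
                  (fun y => ((Pw j).eval y - (wh j).eval y) ^ 2))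
               + Real.sqrt (∑ j, cellInt grid j
                  (fun y => (deriv u y - (Pw j).eval y) ^ 2))
               + hm⁻¹ * Real.sqrt (∑ j, cellInt grid j
                  (fun y => (u y - (Pu j).eval y) ^ 2))) := by
  classical
  obtain ⟨A, hA, htr⟩ := poly_trace_cell (k + 1)
  obtain ⟨c₁, hc₁⟩ : ∃ x : ℝ, x = 2*A*(4*A+2)*δ^2 := ⟨_, rfl⟩
  obtain ⟨c₂, hc₂⟩ : ∃ x : ℝ, x = 2*A*(4*A+2) := ⟨_, rfl⟩
  obtain ⟨c₄, hc₄⟩ : ∃ x : ℝ, x = (4*A+2)*δ := ⟨_, rfl⟩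
  obtain ⟨c₅, hc₅⟩ : ∃ x : ℝ, x = 4*A+2 := ⟨_, rfl⟩
  have hc₁0 : 0 ≤ c₁ := by rw [hc₁]; positivity
  have hc₂0 : 0 ≤ c₂ := by rw [hc₂]; positivity
  have hc₄0 : 0 ≤ c₄ := by rw [hc₄]; positivity
  have hc₅0 : 0 ≤ c₅ := by rw [hc₅]; positivity
  refine ⟨Real.sqrt c₁ + Real.sqrt c₂ + Real.sqrt 2 + Real.sqrt c₄ + Real.sqrt c₅ + 1,
    by positivity, ?_⟩
  intro N grid hm hmono hg0 hglast hmesh u hu uh wh Pu Pw hdeg huhwh huhcont _huhbc hPw hPu hPul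
  -- basic geometry
  have hlr : ∀ j : Fin (N+1), lep grid j < rep grid j := by
    intro j
    exact hmono (Fin.castSucc_lt_succ (i := j))
  have hm0 : 0 < hm := by
    have h1 := hlr 0
    have h2 := (hmesh 0).1
    linarith
  have hminv0 : 0 < hm⁻¹ := inv_pos.mpr hm0
  have hjinv : ∀ j : Fin (N+1), (rep grid j - lep grid j)⁻¹ ≤ δ * hm⁻¹ := by
    intro j
    have hj0 : 0 < rep grid j - lep grid j := by linarith [hlr j]
    have h2 := (hmesh j).2
    set x := rep grid j - lep grid j with hx
    have e1 : x⁻¹ * hm ≤ δ := by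
      calc x⁻¹ * hm ≤ x⁻¹ * (δ * x) := by
            apply mul_le_mul_of_nonneg_left h2 (inv_pos.mpr hj0).le
        _ = δ * (x⁻¹ * x) := by ring
        _ = δ := by rw [inv_mul_cancel₀ hj0.ne', mul_one]
    calc x⁻¹ = (x⁻¹ * hm) * hm⁻¹ := by
          rw [mul_assoc, mul_inv_cancel₀ hm0.ne', mul_one]
      _ ≤ δ * hm⁻¹ := mul_le_mul_of_nonneg_right e1 hminv0.le
  -- apply the per-cell core lemma
  have core : ∀ j : Fin (N+1),
      (u (rep grid j) - (Pu j).eval (rep grid j))^2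
        ≤ (4*A+2) * ((rep grid j - lep grid j)⁻¹
            * (∫ y in lep grid j..rep grid j, (u y - (Pu j).eval y)^2)
          + (rep grid j - lep grid j)
            * ∫ y in lep grid j..rep grid j, (deriv u y - (Pw j).eval y)^2)
      ∧ (∫ y in lep grid j..rep grid j, ((Pu j).derivative.eval y - (Pw j).eval y)^2)
          ≤ A * (rep grid j - lep grid j)⁻¹
            * (u (rep grid j) - (Pu j).eval (rep grid j))^2 := by
    intro j
    exact cell_core k A hA htr (lep grid j) (rep grid j) (hlr j) u hu (Pu j) (Pw j)
      (hdeg j).2.2.1 (hdeg j).2.2.2 (fun φ hφ => hPw j φ hφ) (fun φ hφ => hPu j φ hφ)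
      (hPul j)
  -- abbreviations for the three sums on the right
  set SX : ℝ := ∑ j, cellInt grid j (fun y => ((Pw j).eval y - (wh j).eval y) ^ 2) with hSX
  set SD : ℝ := ∑ j, cellInt grid j (fun y => (deriv u y - (Pw j).eval y) ^ 2) with hSD
  set SN : ℝ := ∑ j, cellInt grid j (fun y => (u y - (Pu j).eval y) ^ 2) with hSN
  have hcell_nonneg : ∀ (f : ℝ → ℝ) (j : Fin (N+1)), (∀ y, 0 ≤ f y) →
      0 ≤ cellInt grid j f := by
    intro f j hf
    exact intervalIntegral.integral_nonneg (hlr j).le (fun y _ => hf y)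
  have hSX0 : 0 ≤ SX := Finset.sum_nonneg (fun j _ => hcell_nonneg _ j (fun y => sq_nonneg _))
  have hSD0 : 0 ≤ SD := Finset.sum_nonneg (fun j _ => hcell_nonneg _ j (fun y => sq_nonneg _))
  have hSN0 : 0 ≤ SN := Finset.sum_nonneg (fun j _ => hcell_nonneg _ j (fun y => sq_nonneg _))
  have hNj0 : ∀ j, 0 ≤ cellInt grid j (fun y => (u y - (Pu j).eval y) ^ 2) :=
    fun j => hcell_nonneg _ j (fun y => sq_nonneg _)
  have hDj0 : ∀ j, 0 ≤ cellInt grid j (fun y => (deriv u y - (Pw j).eval y) ^ 2) :=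
    fun j => hcell_nonneg _ j (fun y => sq_nonneg _)
  have hXj0 : ∀ j, 0 ≤ cellInt grid j (fun y => ((Pw j).eval y - (wh j).eval y) ^ 2) :=
    fun j => hcell_nonneg _ j (fun y => sq_nonneg _)
  -- trace bound per cell, in mesh-uniform form
  have htrace : ∀ j : Fin (N+1),
      (u (rep grid j) - (Pu j).eval (rep grid j))^2
      ≤ c₄ * (hm⁻¹ * cellInt grid j (fun y => (u y - (Pu j).eval y) ^ 2))
        + c₅ * (hm * cellInt grid j (fun y => (deriv u y - (Pw j).eval y) ^ 2)) := by
    intro j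
    have h1 := (core j).1
    have hj0 : 0 < rep grid j - lep grid j := by linarith [hlr j]
    have h2 : (rep grid j - lep grid j)⁻¹
        * (∫ y in lep grid j..rep grid j, (u y - (Pu j).eval y)^2)
        ≤ δ * hm⁻¹ * cellInt grid j (fun y => (u y - (Pu j).eval y) ^ 2) := by
      exact mul_le_mul_of_nonneg_right (hjinv j) (hNj0 j)
    have h3 : (rep grid j - lep grid j)
        * (∫ y in lep grid j..rep grid j, (deriv u y - (Pw j).eval y)^2)
        ≤ hm * cellInt grid j (fun y => (deriv u y - (Pw j).eval y) ^ 2) := by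
      exact mul_le_mul_of_nonneg_right (by linarith [(hmesh j).1]) (hDj0 j)
    calc (u (rep grid j) - (Pu j).eval (rep grid j))^2
        ≤ (4*A+2) * ((rep grid j - lep grid j)⁻¹
            * (∫ y in lep grid j..rep grid j, (u y - (Pu j).eval y)^2)
          + (rep grid j - lep grid j)
            * ∫ y in lep grid j..rep grid j, (deriv u y - (Pw j).eval y)^2) := h1
      _ ≤ (4*A+2) * (δ * hm⁻¹ * cellInt grid j (fun y => (u y - (Pu j).eval y) ^ 2)
            + hm * cellInt grid j (fun y => (deriv u y - (Pw j).eval y) ^ 2)) := by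
          apply mul_le_mul_of_nonneg_left _ (by positivity)
          linarith [h2, h3]
      _ = c₄ * (hm⁻¹ * cellInt grid j (fun y => (u y - (Pu j).eval y) ^ 2))
            + c₅ * (hm * cellInt grid j (fun y => (deriv u y - (Pw j).eval y) ^ 2)) := by
          rw [hc₄, hc₅]; ring
  -- per-cell bound for the volume term
  have hvol : ∀ j : Fin (N+1),
      cellInt grid j (fun y => ((Pu j).derivative.eval y - (uh j).derivative.eval y) ^ 2)
      ≤ c₁ * (hm⁻¹ * (hm⁻¹ * cellInt grid j (fun y => (u y - (Pu j).eval y) ^ 2)))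
        + (c₂ * cellInt grid j (fun y => (deriv u y - (Pw j).eval y) ^ 2)
          + 2 * cellInt grid j (fun y => ((Pw j).eval y - (wh j).eval y) ^ 2)) := by
    intro j
    have hj0 : 0 < rep grid j - lep grid j := by linarith [hlr j]
    have hjinv0 : 0 < (rep grid j - lep grid j)⁻¹ := inv_pos.mpr hj0
    -- replace uh' by wh on the cell
    have e0 : cellInt grid j (fun y => ((Pu j).derivative.eval y - (uh j).derivative.eval y) ^ 2)
        = ∫ y in lep grid j..rep grid j, ((Pu j).derivative.eval y - (wh j).eval y) ^ 2 := by
      apply intervalIntegral.integral_congr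
      intro y hy
      rw [Set.uIcc_of_le (hlr j).le] at hy
      show ((Pu j).derivative.eval y - (uh j).derivative.eval y) ^ 2 = _
      rw [huhwh j y hy]
    -- split into e-part and ξ-part
    have e1 : (∫ y in lep grid j..rep grid j, ((Pu j).derivative.eval y - (wh j).eval y) ^ 2)
        ≤ 2 * (∫ y in lep grid j..rep grid j, ((Pu j).derivative.eval y - (Pw j).eval y) ^ 2)
          + 2 * cellInt grid j (fun y => ((Pw j).eval y - (wh j).eval y) ^ 2) := by
      have hcont1 : Continuous fun y => ((Pu j).derivative.eval y - (wh j).eval y) ^ 2 :=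
        (((Pu j).derivative.continuous).sub ((wh j).continuous)).pow 2
      have hcont2 : Continuous fun y =>
          2*((Pu j).derivative.eval y - (Pw j).eval y) ^ 2
            + 2*((Pw j).eval y - (wh j).eval y) ^ 2 := by
        apply Continuous.add
        · exact continuous_const.mul ((((Pu j).derivative.continuous).sub
            ((Pw j).continuous)).pow 2)
        · exact continuous_const.mul ((((Pw j).continuous).sub ((wh j).continuous)).pow 2)
      have e2 : (∫ y in lep grid j..rep grid j, ((Pu j).derivative.eval y - (wh j).eval y) ^ 2)
          ≤ ∫ y in lep grid j..rep grid j,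
              (2*((Pu j).derivative.eval y - (Pw j).eval y) ^ 2
                + 2*((Pw j).eval y - (wh j).eval y) ^ 2) := by
        apply intervalIntegral.integral_mono_on (hlr j).le
          (hcont1.intervalIntegrable _ _) (hcont2.intervalIntegrable _ _)
        intro y _
        nlinarith [sq_nonneg (((Pu j).derivative.eval y - (Pw j).eval y)
          - ((Pw j).eval y - (wh j).eval y)),
          sq_nonneg (((Pu j).derivative.eval y - (Pw j).eval y)
          + ((Pw j).eval y - (wh j).eval y))]
      rw [intervalIntegral.integral_add
        (f := fun y => 2*((Pu j).derivative.eval y - (Pw j).eval y) ^ 2)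
        (g := fun y => 2*((Pw j).eval y - (wh j).eval y) ^ 2)
        ((continuous_const.mul ((((Pu j).derivative.continuous).sub
            ((Pw j).continuous)).pow 2)).intervalIntegrable _ _)
        ((continuous_const.mul ((((Pw j).continuous).sub
            ((wh j).continuous)).pow 2)).intervalIntegrable _ _),
        intervalIntegral.integral_const_mul, intervalIntegral.integral_const_mul] at e2
      exact e2
    -- bound the e-part
    have e3 : (∫ y in lep grid j..rep grid j, ((Pu j).derivative.eval y - (Pw j).eval y) ^ 2)
        ≤ A * (4*A+2) * (((rep grid j - lep grid j)⁻¹ * (rep grid j - lep grid j)⁻¹)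
            * cellInt grid j (fun y => (u y - (Pu j).eval y) ^ 2)
          + cellInt grid j (fun y => (deriv u y - (Pw j).eval y) ^ 2)) := by
      have h4 := (core j).2
      have h5 := (core j).1
      have h6 : A * (rep grid j - lep grid j)⁻¹
            * (u (rep grid j) - (Pu j).eval (rep grid j))^2
          ≤ A * (rep grid j - lep grid j)⁻¹
            * ((4*A+2) * ((rep grid j - lep grid j)⁻¹
              * cellInt grid j (fun y => (u y - (Pu j).eval y) ^ 2)
            + (rep grid j - lep grid j)
              * cellInt grid j (fun y => (deriv u y - (Pw j).eval y) ^ 2))) :=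
        mul_le_mul_of_nonneg_left h5 (by positivity)
      have h7 : A * (rep grid j - lep grid j)⁻¹
            * ((4*A+2) * ((rep grid j - lep grid j)⁻¹
              * cellInt grid j (fun y => (u y - (Pu j).eval y) ^ 2)
            + (rep grid j - lep grid j)
              * cellInt grid j (fun y => (deriv u y - (Pw j).eval y) ^ 2)))
          = A * (4*A+2) * (((rep grid j - lep grid j)⁻¹ * (rep grid j - lep grid j)⁻¹)
              * cellInt grid j (fun y => (u y - (Pu j).eval y) ^ 2)
            + cellInt grid j (fun y => (deriv u y - (Pw j).eval y) ^ 2))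
            + (A * (4*A+2) * cellInt grid j (fun y => (deriv u y - (Pw j).eval y) ^ 2))
              * ((rep grid j - lep grid j)⁻¹ * (rep grid j - lep grid j) - 1) := by
        ring
      rw [inv_mul_cancel₀ hj0.ne'] at h7
      simp only [sub_self, mul_zero, add_zero] at h7
      linarith [h4, h6, h7.le, h7.ge]
    have e4 : ((rep grid j - lep grid j)⁻¹ * (rep grid j - lep grid j)⁻¹)
          * cellInt grid j (fun y => (u y - (Pu j).eval y) ^ 2)
        ≤ (δ * hm⁻¹) * (δ * hm⁻¹) * cellInt grid j (fun y => (u y - (Pu j).eval y) ^ 2) := by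
      apply mul_le_mul_of_nonneg_right _ (hNj0 j)
      exact mul_le_mul (hjinv j) (hjinv j) hjinv0.le (by positivity)
    rw [e0]
    calc (∫ y in lep grid j..rep grid j, ((Pu j).derivative.eval y - (wh j).eval y) ^ 2)
        ≤ 2 * (∫ y in lep grid j..rep grid j,
              ((Pu j).derivative.eval y - (Pw j).eval y) ^ 2)
          + 2 * cellInt grid j (fun y => ((Pw j).eval y - (wh j).eval y) ^ 2) := e1
      _ ≤ 2 * (A * (4*A+2) * ((δ * hm⁻¹) * (δ * hm⁻¹)
              * cellInt grid j (fun y => (u y - (Pu j).eval y) ^ 2)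
            + cellInt grid j (fun y => (deriv u y - (Pw j).eval y) ^ 2)))
          + 2 * cellInt grid j (fun y => ((Pw j).eval y - (wh j).eval y) ^ 2) := by
          have e5 := add_le_add e4
            (le_refl (cellInt grid j (fun y => (deriv u y - (Pw j).eval y) ^ 2)))
          have e6 := mul_le_mul_of_nonneg_left e5
            (show (0:ℝ) ≤ A * (4*A+2) by positivity)
          have e7 := le_trans e3 e6
          linarith [e7]
      _ = c₁ * (hm⁻¹ * (hm⁻¹ * cellInt grid j (fun y => (u y - (Pu j).eval y) ^ 2)))
          + (c₂ * cellInt grid j (fun y => (deriv u y - (Pw j).eval y) ^ 2)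
            + 2 * cellInt grid j (fun y => ((Pw j).eval y - (wh j).eval y) ^ 2)) := by
          rw [hc₁, hc₂]; ring
  -- sum of volume bounds
  have hsum1 : (∑ j, cellInt grid j
        (fun y => ((Pu j).derivative.eval y - (uh j).derivative.eval y) ^ 2))
      ≤ c₁ * (hm⁻¹ * (hm⁻¹ * SN)) + (c₂ * SD + 2 * SX) := by
    calc (∑ j, cellInt grid j
          (fun y => ((Pu j).derivative.eval y - (uh j).derivative.eval y) ^ 2))
        ≤ ∑ j, (c₁ * (hm⁻¹ * (hm⁻¹ * cellInt grid j (fun y => (u y - (Pu j).eval y) ^ 2)))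
            + (c₂ * cellInt grid j (fun y => (deriv u y - (Pw j).eval y) ^ 2)
              + 2 * cellInt grid j (fun y => ((Pw j).eval y - (wh j).eval y) ^ 2))) :=
          Finset.sum_le_sum (fun j _ => hvol j)
      _ = c₁ * (hm⁻¹ * (hm⁻¹ * SN)) + (c₂ * SD + 2 * SX) := by
          rw [Finset.sum_add_distrib, Finset.sum_add_distrib, hSN, hSD, hSX,
            ← Finset.mul_sum, ← Finset.mul_sum, ← Finset.mul_sum, ← Finset.mul_sum,
            ← Finset.mul_sum]
  -- jump sum bound
  have hsum2 : (∑ j : Fin (N + 1),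
        if h : (j : ℕ) < N then
          (((Pu ⟨(j : ℕ) + 1, by omega⟩).eval (rep grid j)
              - (uh ⟨(j : ℕ) + 1, by omega⟩).eval (rep grid j))
            - ((Pu j).eval (rep grid j) - (uh j).eval (rep grid j))) ^ 2
        else 0)
      ≤ c₄ * (hm⁻¹ * SN) + c₅ * (hm * SD) := by
    calc (∑ j : Fin (N + 1),
          if h : (j : ℕ) < N then
            (((Pu ⟨(j : ℕ) + 1, by omega⟩).eval (rep grid j)
                - (uh ⟨(j : ℕ) + 1, by omega⟩).eval (rep grid j))
              - ((Pu j).eval (rep grid j) - (uh j).eval (rep grid j))) ^ 2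
          else 0)
        ≤ ∑ j, (c₄ * (hm⁻¹ * cellInt grid j (fun y => (u y - (Pu j).eval y) ^ 2))
            + c₅ * (hm * cellInt grid j (fun y => (deriv u y - (Pw j).eval y) ^ 2))) := by
          apply Finset.sum_le_sum
          intro j _
          by_cases hj : (j : ℕ) < N
          · rw [dif_pos hj]
            have hjump : ((Pu ⟨(j : ℕ) + 1, by omega⟩).eval (rep grid j)
                  - (uh ⟨(j : ℕ) + 1, by omega⟩).eval (rep grid j))
                - ((Pu j).eval (rep grid j) - (uh j).eval (rep grid j))
                = u (rep grid j) - (Pu j).eval (rep grid j) := by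
              have hcont := huhcont j hj
              have hlep : lep grid ⟨(j : ℕ) + 1, by omega⟩ = rep grid j := by
                have hfin : (Fin.castSucc (⟨(j : ℕ) + 1, by omega⟩ : Fin (N+1)))
                    = Fin.succ j := by
                  apply Fin.ext
                  simp
                unfold lep rep
                rw [hfin]
              have hv := hPul ⟨(j : ℕ) + 1, by omega⟩
              rw [hlep] at hv
              rw [hv, ← hcont]
              try ring
            rw [hjump]
            exact htrace j
          · rw [dif_neg hj]
            exact add_nonneg (mul_nonneg hc₄0 (mul_nonneg hminv0.le (hNj0 j)))
              (mul_nonneg hc₅0 (mul_nonneg hm0.le (hDj0 j)))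
      _ = c₄ * (hm⁻¹ * SN) + c₅ * (hm * SD) := by
          rw [Finset.sum_add_distrib, hSN, hSD, ← Finset.mul_sum, ← Finset.mul_sum,
            ← Finset.mul_sum, ← Finset.mul_sum]
  -- pass to square roots
  have hsq_helper : ∀ (c s : ℝ), 0 ≤ c → 0 ≤ s →
      Real.sqrt (c * s) = Real.sqrt c * Real.sqrt s := fun c s hc _ => Real.sqrt_mul hc s
  have hsqrt_inv2 : ∀ s : ℝ, 0 ≤ s →
      Real.sqrt (hm⁻¹ * (hm⁻¹ * s)) = hm⁻¹ * Real.sqrt s := by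
    intro s hs
    rw [← mul_assoc, Real.sqrt_mul (by positivity), Real.sqrt_mul_self hminv0.le]
  have term1 : Real.sqrt (∑ j, cellInt grid j
        (fun y => ((Pu j).derivative.eval y - (uh j).derivative.eval y) ^ 2))
      ≤ Real.sqrt c₁ * (hm⁻¹ * Real.sqrt SN)
        + (Real.sqrt c₂ * Real.sqrt SD + Real.sqrt 2 * Real.sqrt SX) := by
    calc Real.sqrt (∑ j, cellInt grid j
          (fun y => ((Pu j).derivative.eval y - (uh j).derivative.eval y) ^ 2))
        ≤ Real.sqrt (c₁ * (hm⁻¹ * (hm⁻¹ * SN)) + (c₂ * SD + 2 * SX)) :=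
          Real.sqrt_le_sqrt hsum1
      _ ≤ Real.sqrt (c₁ * (hm⁻¹ * (hm⁻¹ * SN))) + Real.sqrt (c₂ * SD + 2 * SX) :=
          my_sqrt_add_le _ _ (by positivity) (by positivity)
      _ ≤ Real.sqrt (c₁ * (hm⁻¹ * (hm⁻¹ * SN)))
            + (Real.sqrt (c₂ * SD) + Real.sqrt (2 * SX)) := by
          have := my_sqrt_add_le (c₂ * SD) (2 * SX) (by positivity) (by positivity)
          linarith
      _ = Real.sqrt c₁ * (hm⁻¹ * Real.sqrt SN)
            + (Real.sqrt c₂ * Real.sqrt SD + Real.sqrt 2 * Real.sqrt SX) := by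
          rw [Real.sqrt_mul hc₁0, hsqrt_inv2 SN hSN0, Real.sqrt_mul hc₂0,
            Real.sqrt_mul (by norm_num : (0:ℝ) ≤ 2)]
  have hsqrthm : Real.sqrt hm * Real.sqrt hm = hm := Real.mul_self_sqrt hm0.le
  have hsqrthm0 : 0 < Real.sqrt hm := Real.sqrt_pos.mpr hm0
  have term2 : (Real.sqrt hm)⁻¹ * Real.sqrt (∑ j : Fin (N + 1),
        if h : (j : ℕ) < N then
          (((Pu ⟨(j : ℕ) + 1, by omega⟩).eval (rep grid j)
              - (uh ⟨(j : ℕ) + 1, by omega⟩).eval (rep grid j))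
            - ((Pu j).eval (rep grid j) - (uh j).eval (rep grid j))) ^ 2
        else 0)
      ≤ Real.sqrt c₄ * (hm⁻¹ * Real.sqrt SN) + Real.sqrt c₅ * Real.sqrt SD := by
    have s1 : Real.sqrt (∑ j : Fin (N + 1),
          if h : (j : ℕ) < N then
            (((Pu ⟨(j : ℕ) + 1, by omega⟩).eval (rep grid j)
                - (uh ⟨(j : ℕ) + 1, by omega⟩).eval (rep grid j))
              - ((Pu j).eval (rep grid j) - (uh j).eval (rep grid j))) ^ 2
          else 0)
        ≤ Real.sqrt (c₄ * (hm⁻¹ * SN)) + Real.sqrt (c₅ * (hm * SD)) :=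
      le_trans (Real.sqrt_le_sqrt hsum2)
        (my_sqrt_add_le _ _ (by positivity) (by positivity))
    have hinvsq : (Real.sqrt hm)⁻¹ * (Real.sqrt hm)⁻¹ = hm⁻¹ := by
      rw [← mul_inv, hsqrthm]
    have s2 : (Real.sqrt hm)⁻¹ * Real.sqrt (c₄ * (hm⁻¹ * SN))
        = Real.sqrt c₄ * (hm⁻¹ * Real.sqrt SN) := by
      rw [Real.sqrt_mul hc₄0, Real.sqrt_mul hminv0.le, Real.sqrt_inv]
      calc (Real.sqrt hm)⁻¹ * (Real.sqrt c₄ * ((Real.sqrt hm)⁻¹ * Real.sqrt SN))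
          = Real.sqrt c₄ * (((Real.sqrt hm)⁻¹ * (Real.sqrt hm)⁻¹) * Real.sqrt SN) := by ring
        _ = Real.sqrt c₄ * (hm⁻¹ * Real.sqrt SN) := by rw [hinvsq]
    have s3 : (Real.sqrt hm)⁻¹ * Real.sqrt (c₅ * (hm * SD))
        = Real.sqrt c₅ * Real.sqrt SD := by
      rw [Real.sqrt_mul hc₅0, Real.sqrt_mul hm0.le]
      calc (Real.sqrt hm)⁻¹ * (Real.sqrt c₅ * (Real.sqrt hm * Real.sqrt SD))
          = Real.sqrt c₅ * (((Real.sqrt hm)⁻¹ * Real.sqrt hm) * Real.sqrt SD) := by ring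
        _ = Real.sqrt c₅ * Real.sqrt SD := by
            rw [inv_mul_cancel₀ hsqrthm0.ne', one_mul]
    calc (Real.sqrt hm)⁻¹ * Real.sqrt (∑ j : Fin (N + 1),
          if h : (j : ℕ) < N then
            (((Pu ⟨(j : ℕ) + 1, by omega⟩).eval (rep grid j)
                - (uh ⟨(j : ℕ) + 1, by omega⟩).eval (rep grid j))
              - ((Pu j).eval (rep grid j) - (uh j).eval (rep grid j))) ^ 2
          else 0)
        ≤ (Real.sqrt hm)⁻¹ * (Real.sqrt (c₄ * (hm⁻¹ * SN)) + Real.sqrt (c₅ * (hm * SD))) :=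
          mul_le_mul_of_nonneg_left s1 (by positivity)
      _ = Real.sqrt c₄ * (hm⁻¹ * Real.sqrt SN) + Real.sqrt c₅ * Real.sqrt SD := by
          rw [mul_add, s2, s3]
  -- combine
  have ha0 : 0 ≤ hm⁻¹ * Real.sqrt SN := by positivity
  have hb0 : 0 ≤ Real.sqrt SD := Real.sqrt_nonneg _
  have hd0 : 0 ≤ Real.sqrt SX := Real.sqrt_nonneg _
  have hca : 0 ≤ Real.sqrt c₁ := Real.sqrt_nonneg _
  have hcb : 0 ≤ Real.sqrt c₂ := Real.sqrt_nonneg _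
  have hcc : 0 ≤ Real.sqrt 2 := Real.sqrt_nonneg _
  have hcd : 0 ≤ Real.sqrt c₄ := Real.sqrt_nonneg _
  have hce : 0 ≤ Real.sqrt c₅ := Real.sqrt_nonneg _
  linarith [term1, term2, mul_nonneg hca ha0, mul_nonneg hcb hb0, mul_nonneg hcc hd0,
    mul_nonneg hcd ha0, mul_nonneg hce hb0,
    mul_nonneg hca hb0, mul_nonneg hca hd0, mul_nonneg hcb ha0, mul_nonneg hcb hd0,
    mul_nonneg hcc ha0, mul_nonneg hcc hb0, mul_nonneg hcd hb0, mul_nonneg hcd hd0,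
    mul_nonneg hce ha0, mul_nonneg hce hd0, ha0, hb0, hd0]

end
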